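/- (Detection Capability, FPR = 0.) Let n ≥ 2, d ≥ 2, and let M be a finite set of nodes (the malicious clients) of the d^n hypermesh such that either |M| < n, or |M| = n and some two distinct elements of M lie in a common edge. Then for every node x ∉ M there exists an edge containing x that contains no element of M; hence no benign client appears in n flagged groups and no benign client is misidentified as malicious. -/

import Mathlib

/-- The edge (group) through node `x` in direction `k` of the `d^n` hypermesh:
all nodes agreeing with `x` at every coordinate other than `k`. -/
def edgeThrough (n d : ℕ) (k : Fin n) (x : Fin n → Fin d) : Finset (Fin n → Fin d) :=
  Finset.univ.filter (fun y => ∀ j, j ≠ k → y j = x j)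

/-- A set of nodes is an edge of the `d^n` hypermesh when it is the edge through
some node in some direction. -/
def IsEdge (n d : ℕ) (E : Finset (Fin n → Fin d)) : Prop :=
  ∃ k x, E = edgeThrough n d k x

/-- The finset of all edges of the `d^n` hypermesh. -/
def hypermeshEdges (n d : ℕ) : Finset (Finset (Fin n → Fin d)) :=
  Finset.univ.image (fun p : Fin n × (Fin n → Fin d) => edgeThrough n d p.1 p.2)

/-!
A malicious client `m ≠ x` lies on the edge through `x` in direction `k` only if `m` differs
from `x` exactly at coordinate `k`, so each malicious client blocks at most one of the `n` edges
through `x`, and fewer than `n` of them leave an edge through `x` free. Two malicious clients on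
a common edge in direction `k` agree off `k`; if they blocked two different directions
`k₁ ≠ k₂` through `x`, they would differ at both `k₁` and `k₂`, forcing `k₁ = k = k₂`. So
together they block at most one direction, and `n` such clients block at most `n - 1`.
-/

open Finset

lemma Finset.card_biUnion_lt_of_card_union_le_one {α β : Type*} [DecidableEq α]
    [DecidableEq β] {s : Finset α} {f : α → Finset β} (hf : ∀ a ∈ s, #(f a) ≤ 1) {a b : α}
    (ha : a ∈ s) (hb : b ∈ s) (hab : a ≠ b) (habf : #(f a ∪ f b) ≤ 1) : #(s.biUnion f) < #s := by
  set t := (s.erase a).erase b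
  have hsub : s.biUnion f ⊆ t.biUnion f ∪ (f a ∪ f b) := by
    intro y hy
    obtain ⟨m, hm, hym⟩ := mem_biUnion.1 hy
    by_cases hma : m = a
    · subst hma; simp [hym]
    by_cases hmb : m = b
    · subst hmb; simp [hym]
    exact mem_union_left _ (mem_biUnion.2 ⟨m, by simp [t, hm, hma, hmb], hym⟩)
  have ht : #t + 2 = #s := by
    rw [card_erase_of_mem (mem_erase.2 ⟨hab.symm, hb⟩), card_erase_of_mem ha]
    have : 2 ≤ #s := one_lt_card.2 ⟨a, ha, b, hb, hab⟩
    omega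
  calc #(s.biUnion f) ≤ #(t.biUnion f) + #(f a ∪ f b) :=
        (card_le_card hsub).trans (card_union_le _ _)
    _ ≤ #t * 1 + 1 := add_le_add (card_biUnion_le_card_mul _ _ _ fun m hm =>
        hf m (mem_of_mem_erase (mem_of_mem_erase hm))) habf
    _ < #s := by omega

section Hypermesh

variable {n d : ℕ}

@[simp]
lemma mem_edgeThrough {k : Fin n} {x y : Fin n → Fin d} :
    y ∈ edgeThrough n d k x ↔ ∀ j, j ≠ k → y j = x j := by
  simp [edgeThrough]

lemma eq_of_mem_edgeThrough_of_apply_ne {k j : Fin n} {x y : Fin n → Fin d}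
    (hy : y ∈ edgeThrough n d k x) (hj : y j ≠ x j) : j = k := by
  by_contra h
  exact hj (mem_edgeThrough.1 hy j h)

lemma apply_ne_of_mem_edgeThrough_of_ne {k : Fin n} {x y : Fin n → Fin d}
    (hy : y ∈ edgeThrough n d k x) (hne : y ≠ x) : y k ≠ x k := by
  intro h
  apply hne
  funext j
  by_cases hj : j = k
  · exact hj ▸ h
  · exact mem_edgeThrough.1 hy j hj

lemma eq_or_eq_of_mem_edgeThrough {k k₁ k₂ : Fin n} {x z a b : Fin n → Fin d}
    (ha : a ∈ edgeThrough n d k₁ x) (hax : a ≠ x) (hb : b ∈ edgeThrough n d k₂ x)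
    (haz : a ∈ edgeThrough n d k z) (hbz : b ∈ edgeThrough n d k z) : k₁ = k₂ ∨ k₁ = k := by
  by_cases h : k₁ = k₂
  · exact Or.inl h
  refine Or.inr (by_contra fun hk => apply_ne_of_mem_edgeThrough_of_ne ha hax ?_)
  rw [mem_edgeThrough.1 haz k₁ hk, ← mem_edgeThrough.1 hbz k₁ hk, mem_edgeThrough.1 hb k₁ h]

def edgeDirections (x y : Fin n → Fin d) : Finset (Fin n) :=
  univ.filter fun k => y ∈ edgeThrough n d k x

@[simp]
lemma mem_edgeDirections {k : Fin n} {x y : Fin n → Fin d} :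
    k ∈ edgeDirections x y ↔ y ∈ edgeThrough n d k x := by
  simp [edgeDirections]

lemma card_edgeDirections_le_one {x y : Fin n → Fin d} (hne : y ≠ x) :
    #(edgeDirections x y) ≤ 1 :=
  card_le_one.2 fun _ hk _ hk' =>
    (eq_of_mem_edgeThrough_of_apply_ne (mem_edgeDirections.1 hk')
      (apply_ne_of_mem_edgeThrough_of_ne (mem_edgeDirections.1 hk) hne))

lemma card_union_edgeDirections_le_one {k : Fin n} {x z a b : Fin n → Fin d} (hax : a ≠ x)
    (hbx : b ≠ x) (haz : a ∈ edgeThrough n d k z) (hbz : b ∈ edgeThrough n d k z) :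
    #(edgeDirections x a ∪ edgeDirections x b) ≤ 1 := by
  have hab : ∀ k₁ ∈ edgeDirections x a, ∀ k₂ ∈ edgeDirections x b, k₁ = k₂ := by
    intro k₁ h₁ k₂ h₂
    rw [mem_edgeDirections] at h₁ h₂
    rcases eq_or_eq_of_mem_edgeThrough h₁ hax h₂ haz hbz with h | h₁k
    · exact h
    rcases eq_or_eq_of_mem_edgeThrough h₂ hbx h₁ hbz haz with h | h₂k
    · exact h.symm
    · exact h₁k.trans h₂k.symm
  refine card_le_one.2 fun k₁ h₁ k₂ h₂ => ?_
  rcases mem_union.1 h₁ with h₁ | h₁ <;> rcases mem_union.1 h₂ with h₂ | h₂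
  · exact card_le_one.1 (card_edgeDirections_le_one hax) _ h₁ _ h₂
  · exact hab _ h₁ _ h₂
  · exact (hab _ h₂ _ h₁).symm
  · exact card_le_one.1 (card_edgeDirections_le_one hbx) _ h₁ _ h₂

end Hypermesh

theorem fpr_zero_general {n d : ℕ} (M : Finset (Fin n → Fin d))
    (hM : M.card < n ∨ (M.card = n ∧ ∃ a ∈ M, ∃ b ∈ M, a ≠ b ∧
      ∃ E : Finset (Fin n → Fin d), IsEdge n d E ∧ a ∈ E ∧ b ∈ E)) :
    ∀ x : Fin n → Fin d, x ∉ M →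
      ∃ E : Finset (Fin n → Fin d), IsEdge n d E ∧ x ∈ E ∧ ∀ m ∈ M, m ∉ E := by
  intro x hx
  have hne : ∀ m ∈ M, m ≠ x := fun m hm h => hx (h ▸ hm)
  have hdir : ∀ m ∈ M, #(edgeDirections x m) ≤ 1 := fun m hm =>
    card_edgeDirections_le_one (hne m hm)
  have hblocked : #(M.biUnion (edgeDirections x)) < #(univ : Finset (Fin n)) := by
    rw [card_univ, Fintype.card_fin]
    rcases hM with hlt | ⟨hMn, a, ha, b, hb, hab, E, ⟨k, z, rfl⟩, haE, hbE⟩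
    · exact (card_biUnion_le_card_mul _ _ 1 hdir).trans_lt (by simpa using hlt)
    · exact (card_biUnion_lt_of_card_union_le_one hdir ha hb hab
        (card_union_edgeDirections_le_one (hne a ha) (hne b hb) haE hbE)).trans_eq hMn
  obtain ⟨k, -, hk⟩ := exists_mem_notMem_of_card_lt_card hblocked
  exact ⟨edgeThrough n d k x, ⟨k, x, rfl⟩, by simp,
    fun m hm hmE => hk (mem_biUnion.2 ⟨m, hm, mem_edgeDirections.2 hmE⟩)⟩

/-- Detection capability of MUD-PQFed (FPR = 0): if the set `M` of malicious
clients satisfies `|M| < n`, or `|M| = n` with two distinct malicious clients in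
a common edge, then every benign node `x ∉ M` lies in some edge containing no
malicious client, so `x` is not misidentified as malicious. -/
theorem fpr_zero {n d : ℕ} (hn : 2 ≤ n) (hd : 2 ≤ d) (M : Finset (Fin n → Fin d))
    (hM : M.card < n ∨ (M.card = n ∧ ∃ a ∈ M, ∃ b ∈ M, a ≠ b ∧
      ∃ E : Finset (Fin n → Fin d), IsEdge n d E ∧ a ∈ E ∧ b ∈ E)) :
    ∀ x : Fin n → Fin d, x ∉ M →
      ∃ E : Finset (Fin n → Fin d), IsEdge n d E ∧ x ∈ E ∧ ∀ m ∈ M, m ∉ E :=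
  fpr_zero_general M hM
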